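/- arXiv:1103.0152 — 5 statements merged into one kernel-verified Lean document; each statement's English description precedes it below -/
import Mathlib

section
/- Let Λ : ℝ² → ℝ, let h, g : ℝ → ℝ be continuous and nowhere zero, and let U, V : ℝ → ℝ be differentiable bijections with U′ = 1/h and V′ = 1/g. Define Φ : ℝ² → ℝ² by Φ(x,t) = (U⁻¹(x−t), V⁻¹(x+t)). Then for every (x,t) ∈ ℝ² and every tangent vector (a,b) ∈ ℝ², writing (p,q) for the image of (a,b) under the derivative of Φ at (x,t), one has Λ(Φ(x,t))·p·q = Λ(Φ(x,t))·h(U⁻¹(x−t))·g(V⁻¹(x+t))·(a² − b²). In other words, the pullback under Φ of the quadratic form Λ du dv is (Λ∘Φ)·(h∘U⁻¹(x−t))·(g∘V⁻¹(x+t))·(dx² − dt²). -/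
/-!
By the easy half of the inverse function theorem, `U⁻¹` has derivative `h ∘ U⁻¹` and `V⁻¹` has
derivative `g ∘ V⁻¹`. That half needs the inverses to be continuous: a continuous bijection of `ℝ`
is strictly monotone or strictly antitone, so its inverse is a monotone or antitone surjection.
Hence `dΦ(a, b) = (h (U⁻¹(x−t)) (a − b), g (V⁻¹(x+t)) (a + b))`, and `(a − b)(a + b) = a² − b²`.
-/

open Function

theorem Function.Bijective.continuous_invFun
    {α δ : Type*} [ConditionallyCompleteLinearOrder α] [TopologicalSpace α] [OrderTopology α]
    [DenselyOrdered α] [Nonempty α] [LinearOrder δ] [TopologicalSpace δ] [OrderTopology δ]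
    {f : α → δ} (hbij : Bijective f) (hf : Continuous f) : Continuous (invFun f) := by
  have hinv : RightInverse (invFun f) f := rightInverse_invFun hbij.2
  have hsurj : Surjective (invFun f) := (leftInverse_invFun hbij.1).surjective
  rcases hf.strictMono_of_inj hbij.1 with hmono | hanti
  · exact Monotone.continuous_of_surjective
      (fun a b hab => hmono.le_iff_le.1 (by rwa [hinv a, hinv b])) hsurj
  · have hanti' : Antitone (invFun f) :=
      fun a b hab => hanti.le_iff_ge.1 (by rwa [hinv a, hinv b])
    exact Monotone.continuous_of_surjective (β := αᵒᵈ) hanti'.dual_right hsurj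

theorem Function.Bijective.hasDerivAt_invFun {f : ℝ → ℝ} {f' y : ℝ} (hbij : Bijective f)
    (hf : Continuous f) (hderiv : HasDerivAt f f' (invFun f y)) (hf' : f' ≠ 0) :
    HasDerivAt (invFun f) f'⁻¹ y :=
  hderiv.of_local_left_inverse (hbij.continuous_invFun hf).continuousAt hf'
    (.of_forall (rightInverse_invFun hbij.2))

theorem fderiv_nullCoords_apply {φ ψ : ℝ → ℝ} {φ' ψ' x t : ℝ}
    (hφ : HasDerivAt φ φ' (x - t)) (hψ : HasDerivAt ψ ψ' (x + t)) (a b : ℝ) :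
    fderiv ℝ (fun p : ℝ × ℝ => (φ (p.1 - p.2), ψ (p.1 + p.2))) (x, t) (a, b) =
      (φ' * (a - b), ψ' * (a + b)) := by
  let fst := ContinuousLinearMap.fst ℝ ℝ ℝ
  let snd := ContinuousLinearMap.snd ℝ ℝ ℝ
  have hdiff : HasFDerivAt (fun p : ℝ × ℝ => p.1 - p.2) (fst - snd) (x, t) :=
    (fst - snd).hasFDerivAt
  have hsum : HasFDerivAt (fun p : ℝ × ℝ => p.1 + p.2) (fst + snd) (x, t) :=
    (fst + snd).hasFDerivAt
  have hΦ : HasFDerivAt (fun p : ℝ × ℝ => (φ (p.1 - p.2), ψ (p.1 + p.2)))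
      ((φ' • (fst - snd)).prod (ψ' • (fst + snd))) (x, t) :=
    (hφ.comp_hasFDerivAt (x, t) hdiff).prodMk (hψ.comp_hasFDerivAt (x, t) hsum)
  rw [hΦ.fderiv]
  simp [fst, snd, mul_add]

theorem stmt1_general (Λ : ℝ × ℝ → ℝ) (h g : ℝ → ℝ)
    (hh0 : ∀ u, h u ≠ 0) (hg0 : ∀ v, g v ≠ 0)
    (U V : ℝ → ℝ) (hU : Differentiable ℝ U) (hV : Differentiable ℝ V)
    (hUbij : Function.Bijective U) (hVbij : Function.Bijective V)
    (hU' : ∀ u, deriv U u = 1 / h u) (hV' : ∀ v, deriv V v = 1 / g v)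
    (Φ : ℝ × ℝ → ℝ × ℝ)
    (hΦ : ∀ x t : ℝ, Φ (x, t) = (Function.invFun U (x - t), Function.invFun V (x + t))) :
    ∀ x t a b : ℝ,
      Λ (Φ (x, t)) * (fderiv ℝ Φ (x, t) (a, b)).1 * (fderiv ℝ Φ (x, t) (a, b)).2 =
        Λ (Φ (x, t)) * h (Function.invFun U (x - t)) * g (Function.invFun V (x + t)) *
          (a ^ 2 - b ^ 2) := by
  have hinvU (y : ℝ) : HasDerivAt (invFun U) (h (invFun U y)) y := by
    simpa [hU'] using hUbij.hasDerivAt_invFun hU.continuous (hU _).hasDerivAt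
      (by simpa [hU'] using hh0 _)
  have hinvV (y : ℝ) : HasDerivAt (invFun V) (g (invFun V y)) y := by
    simpa [hV'] using hVbij.hasDerivAt_invFun hV.continuous (hV _).hasDerivAt
      (by simpa [hV'] using hg0 _)
  have hΦfun : Φ = fun p : ℝ × ℝ => (invFun U (p.1 - p.2), invFun V (p.1 + p.2)) :=
    funext fun p => hΦ p.1 p.2
  intro x t a b
  rw [hΦfun, fderiv_nullCoords_apply (hinvU (x - t)) (hinvV (x + t))]
  ring

/-- Coordinate-change step of Proposition 1: with `U′ = 1/h`, `V′ = 1/g`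
and `Φ(x,t) = (U⁻¹(x−t), V⁻¹(x+t))`, the pullback under `Φ` of the quadratic form
`Λ du dv` is `(Λ∘Φ)·h(U⁻¹(x−t))·g(V⁻¹(x+t))·(dx² − dt²)`: for every point `(x,t)` and
tangent vector `(a,b)` with image `(p,q)` under the derivative of `Φ`,
`Λ(Φ(x,t))·p·q = Λ(Φ(x,t))·h(U⁻¹(x−t))·g(V⁻¹(x+t))·(a² − b²)`. -/
theorem stmt1 (Λ : ℝ × ℝ → ℝ) (h g : ℝ → ℝ) (hh : Continuous h) (hg : Continuous g)
    (hh0 : ∀ u, h u ≠ 0) (hg0 : ∀ v, g v ≠ 0)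
    (U V : ℝ → ℝ) (hU : Differentiable ℝ U) (hV : Differentiable ℝ V)
    (hUbij : Function.Bijective U) (hVbij : Function.Bijective V)
    (hU' : ∀ u, deriv U u = 1 / h u) (hV' : ∀ v, deriv V v = 1 / g v)
    (Φ : ℝ × ℝ → ℝ × ℝ)
    (hΦ : ∀ x t : ℝ, Φ (x, t) = (Function.invFun U (x - t), Function.invFun V (x + t))) :
    ∀ x t a b : ℝ,
      Λ (Φ (x, t)) * (fderiv ℝ Φ (x, t) (a, b)).1 * (fderiv ℝ Φ (x, t) (a, b)).2 =
        Λ (Φ (x, t)) * h (Function.invFun U (x - t)) * g (Function.invFun V (x + t)) *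
          (a ^ 2 - b ^ 2) :=
  stmt1_general Λ h g hh0 hg0 U V hU hV hUbij hVbij hU' hV' Φ hΦ
end

section
/- Let Λ : ℝ² → ℝ be C² and nowhere zero (coordinates (u,v)), and let ψ : ℝ → ℝ be C² with ψ′ nowhere zero; regard ψ as the function (u,v) ↦ ψ(v), so that dψ = ψ′(v) dv is an exact one-form that is null with respect to the metric g = Λ du dv. Its metric dual is the vector field X = (2ψ′(v)/Λ(u,v), 0). If X is a conformal Killing field of g, then ∂_u ∂_v (log |Λ|) = 0 identically on ℝ²; equivalently, the metric Λ du dv is flat. -/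
/-- Partial derivative of a function on ℝ² with respect to the `i`-th coordinate. -/
noncomputable def pd (i : Fin 2) (f : ℝ × ℝ → ℝ) (p : ℝ × ℝ) : ℝ :=
  if i = 0 then deriv (fun u => f (u, p.2)) p.1 else deriv (fun v => f (p.1, v)) p.2

/-- Coordinate Lie derivative of a 2×2 metric `g` along the vector field `X`:
`(L_X g)_{ab} = Σ_c X^c ∂_c g_{ab} + Σ_c g_{cb} ∂_a X^c + Σ_c g_{ac} ∂_b X^c`. -/
noncomputable def lieDeriv (g : Fin 2 → Fin 2 → ℝ × ℝ → ℝ) (X : Fin 2 → ℝ × ℝ → ℝ)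
    (a b : Fin 2) (p : ℝ × ℝ) : ℝ :=
  (∑ c, X c p * pd c (g a b) p) + (∑ c, g c b p * pd a (X c) p) +
    (∑ c, g a c p * pd b (X c) p)

/-- `X` is a conformal Killing field of the metric `g` if `L_X g = ρ · g` for some
function `ρ`. -/
def IsConformalKilling (g : Fin 2 → Fin 2 → ℝ × ℝ → ℝ) (X : Fin 2 → ℝ × ℝ → ℝ) : Prop :=
  ∃ ρ : ℝ × ℝ → ℝ, ∀ a b p, lieDeriv g X a b p = ρ p * g a b p

/-! The `vv`-component of the conformal Killing equation reads `Λ ∂_v X^u = ρ g_{vv} = 0`, so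
`ψ′(v)/Λ(u,v)` is constant in `v`. Hence `∂_v log|Λ| = ψ″/ψ′` depends on `v` alone and its
`u`-derivative vanishes. -/

theorem pd_zero_apply (f : ℝ × ℝ → ℝ) (p : ℝ × ℝ) :
    pd 0 f p = deriv (fun u => f (u, p.2)) p.1 :=
  if_pos rfl

theorem pd_one_apply (f : ℝ × ℝ → ℝ) (p : ℝ × ℝ) :
    pd 1 f p = deriv (fun v => f (p.1, v)) p.2 :=
  if_neg (by decide)

theorem pd_zero_eq_zero_of_eq_comp_snd {f : ℝ × ℝ → ℝ} {c : ℝ → ℝ} (hf : f = c ∘ Prod.snd)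
    (p : ℝ × ℝ) : pd 0 f p = 0 := by
  simp [pd_zero_apply, hf]

/-- The metric `Λ du dv`. -/
noncomputable def nullMetric (Λ : ℝ × ℝ → ℝ) : Fin 2 → Fin 2 → ℝ × ℝ → ℝ :=
  fun a b p => if a = b then 0 else Λ p / 2

theorem lieDeriv_nullMetric_one_one (Λ : ℝ × ℝ → ℝ) (X : Fin 2 → ℝ × ℝ → ℝ) (p : ℝ × ℝ) :
    lieDeriv (nullMetric Λ) X 1 1 p = Λ p * pd 1 (X 0) p := by
  simp [lieDeriv, nullMetric, pd, Fin.sum_univ_two, ← add_mul]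

theorem IsConformalKilling.pd_one_zero_eq_zero {Λ : ℝ × ℝ → ℝ} {X : Fin 2 → ℝ × ℝ → ℝ}
    (hX : IsConformalKilling (nullMetric Λ) X) (hΛ : ∀ p, Λ p ≠ 0) (p : ℝ × ℝ) :
    pd 1 (X 0) p = 0 := by
  obtain ⟨ρ, hρ⟩ := hX
  have h := hρ 1 1 p
  rw [lieDeriv_nullMetric_one_one] at h
  simpa [nullMetric, hΛ p] using h

theorem logDeriv_eq_of_deriv_div_eq_zero {𝕜 𝕜' : Type*} [NontriviallyNormedField 𝕜]
    [NontriviallyNormedField 𝕜'] [NormedAlgebra 𝕜 𝕜'] {f g : 𝕜 → 𝕜'} {x : 𝕜}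
    (hf : f x ≠ 0) (hg : g x ≠ 0) (hdf : DifferentiableAt 𝕜 f x) (hdg : DifferentiableAt 𝕜 g x)
    (h : deriv (fun z => f z / g z) x = 0) : logDeriv g x = logDeriv f x := by
  have hdiv := logDeriv_div x hf hg hdf hdg
  rw [logDeriv_apply, h, zero_div] at hdiv
  exact (sub_eq_zero.mp hdiv.symm).symm

/-- first Lemma of Appendix B. For the metric `g = Λ du dv`
(`g_{uu} = g_{vv} = 0`, `g_{uv} = Λ/2`) with `Λ` C² and nowhere zero, if the metric
dual `X = (2ψ′(v)/Λ, 0)` of the null exact one-form `dψ = ψ′(v) dv` (with `ψ` C² and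
`ψ′` nowhere zero) is a conformal Killing field, then `∂_u ∂_v log|Λ| = 0`
identically, i.e. the metric is flat. -/
theorem stmt5 (Λ : ℝ × ℝ → ℝ) (hΛ : ContDiff ℝ 2 Λ) (hΛne : ∀ p, Λ p ≠ 0)
    (ψ : ℝ → ℝ) (hψ : ContDiff ℝ 2 ψ) (hψ' : ∀ v, deriv ψ v ≠ 0)
    (hCKV : IsConformalKilling (fun a b p => if a = b then 0 else Λ p / 2)
      ![fun p => 2 * deriv ψ p.2 / Λ p, fun _ => 0]) :
    ∀ p : ℝ × ℝ, pd 0 (pd 1 (fun q => Real.log |Λ q|)) p = 0 := by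
  have hdψ : Differentiable ℝ (deriv ψ) := hψ.differentiable_deriv_two
  have hdΛ : ∀ u, Differentiable ℝ fun v => Λ (u, v) := fun u =>
    (hΛ.differentiable two_ne_zero).comp (differentiable_const u |>.prodMk differentiable_id)
  have hX : ∀ q : ℝ × ℝ, deriv (fun v => 2 * deriv ψ v / Λ (q.1, v)) q.2 = 0 := fun q => by
    simpa [pd_one_apply] using hCKV.pd_one_zero_eq_zero hΛne q
  have hlog : pd 1 (fun q => Real.log |Λ q|) = logDeriv (deriv ψ) ∘ Prod.snd := by
    ext ⟨u, v⟩
    simp only [pd_one_apply, Real.log_abs, Function.comp_apply]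
    rw [← Function.comp_def, Real.deriv_log_comp_eq_logDeriv (hdΛ u v) (hΛne (u, v)),
      ← logDeriv_const_mul (f := deriv ψ) v 2 two_ne_zero]
    exact logDeriv_eq_of_deriv_div_eq_zero (mul_ne_zero two_ne_zero (hψ' v)) (hΛne (u, v))
      ((hdψ v).const_mul 2) (hdΛ u v) (hX (u, v))
  exact pd_zero_eq_zero_of_eq_comp_snd hlog
end

section
/- Fix real numbers a > 0, f₀, ℓ > 0, μ ≠ 0 and a sign s ∈ {−1, 1}. Set R̄₀ := −6a²/ℓ² − f₀²/2 (the 2d curvature forced by the dilaton equation at constant fields with α = 1). Then the constant-field Kink expression factorizes: (1/2)·a·f₀² − (2/ℓ²)·a³ + (s/(2μ))·(f₀·R̄₀ + 2f₀³) = (1/2)·(a + s·(3/(2μ))·f₀)·(f₀ − (2/ℓ)·a)·(f₀ + (2/ℓ)·a). Consequently this expression vanishes if and only if f₀ = (2/ℓ)a, or f₀ = −(2/ℓ)a, or a = −s·(3/(2μ))·f₀. -/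
-- A polynomial identity in `a`, `f`, `ℓ⁻¹`, `μ⁻¹`, so it also holds under `x / 0 = 0`.
theorem kink_factorization {K : Type*} [Field K] [CharZero K] (a f ℓ μ s : K) :
    (1 / 2) * a * f ^ 2 - (2 / ℓ ^ 2) * a ^ 3 +
        (s / (2 * μ)) * (f * (-6 * a ^ 2 / ℓ ^ 2 - f ^ 2 / 2) + 2 * f ^ 3) =
      (1 / 2) * (a + s * (3 / (2 * μ)) * f) * (f - (2 / ℓ) * a) * (f + (2 / ℓ) * a) := by
  ring

theorem half_mul_mul_sub_mul_add_eq_zero_iff {K : Type*} [Field K] [NeZero (2 : K)]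
    (x y c : K) : (1 / 2) * x * (y - c) * (y + c) = 0 ↔ y = c ∨ y = -c ∨ x = 0 := by
  simp only [mul_eq_zero, one_div, inv_eq_zero, two_ne_zero, false_or, sub_eq_zero,
    add_eq_zero_iff_eq_neg]
  tauto

theorem stmt6_general (a f₀ ℓ μ s R₀ : ℝ) (hR₀ : R₀ = -6 * a ^ 2 / ℓ ^ 2 - f₀ ^ 2 / 2) :
    ((1 / 2) * a * f₀ ^ 2 - (2 / ℓ ^ 2) * a ^ 3 +
        (s / (2 * μ)) * (f₀ * R₀ + 2 * f₀ ^ 3) =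
      (1 / 2) * (a + s * (3 / (2 * μ)) * f₀) * (f₀ - (2 / ℓ) * a) * (f₀ + (2 / ℓ) * a)) ∧
    ((1 / 2) * a * f₀ ^ 2 - (2 / ℓ ^ 2) * a ^ 3 +
        (s / (2 * μ)) * (f₀ * R₀ + 2 * f₀ ^ 3) = 0 ↔
      f₀ = (2 / ℓ) * a ∨ f₀ = -((2 / ℓ) * a) ∨ a = -(s * (3 / (2 * μ)) * f₀)) := by
  subst hR₀
  refine ⟨kink_factorization a f₀ ℓ μ s, ?_⟩
  rw [kink_factorization, half_mul_mul_sub_mul_add_eq_zero_iff, add_eq_zero_iff_eq_neg]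

/-- At constant fields (with `α = 1`), with
`R̄₀ = −6a²/ℓ² − f₀²/2` fixed by the dilaton equation, the constant-field Kink
expression factorizes as
`(1/2)·(a + s·(3/(2μ))·f₀)·(f₀ − (2/ℓ)·a)·(f₀ + (2/ℓ)·a)`, and consequently it
vanishes iff `f₀ = (2/ℓ)a`, `f₀ = −(2/ℓ)a`, or `a = −s·(3/(2μ))·f₀`
(AdS₃ and warped AdS₃). -/
theorem stmt6 (a f₀ ℓ μ s R₀ : ℝ) (ha : 0 < a) (hℓ : 0 < ℓ) (hμ : μ ≠ 0)
    (hs : s = -1 ∨ s = 1) (hR₀ : R₀ = -6 * a ^ 2 / ℓ ^ 2 - f₀ ^ 2 / 2) :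
    ((1 / 2) * a * f₀ ^ 2 - (2 / ℓ ^ 2) * a ^ 3 +
        (s / (2 * μ)) * (f₀ * R₀ + 2 * f₀ ^ 3) =
      (1 / 2) * (a + s * (3 / (2 * μ)) * f₀) * (f₀ - (2 / ℓ) * a) * (f₀ + (2 / ℓ) * a)) ∧
    ((1 / 2) * a * f₀ ^ 2 - (2 / ℓ ^ 2) * a ^ 3 +
        (s / (2 * μ)) * (f₀ * R₀ + 2 * f₀ ^ 3) = 0 ↔
      f₀ = (2 / ℓ) * a ∨ f₀ = -((2 / ℓ) * a) ∨ a = -(s * (3 / (2 * μ)) * f₀)) :=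
  stmt6_general a f₀ ℓ μ s R₀ hR₀
end

section
/- Fix a sign s ∈ {−1, 1} and real numbers μ ≠ 0, ℓ > 0, δ, and set d := 3/ℓ² + μ²/9. Define f, F, G, H : ℝ → ℝ by f(φ) = −s·(2μ/3)e^{−φ} + δe^{−2φ}, F(φ) = −s·(2/3)μδe^{−φ} + (1/4)δ²e^{−2φ} + d, G(φ) = s·(2/3)μδe^{−φ} − (1/2)δ²e^{−2φ}, H(φ) = −δ²e^{−2φ} + s·(2/3)μδe^{−φ}. Then for all φ ∈ ℝ: (i) F′(φ) = G(φ); (ii) G′(φ) = −H(φ); (iii) [dilaton equation, α = 0] H(φ) − 2G(φ) − 2F(φ) + (1/2)e^{2φ}f(φ)² = −6/ℓ²; (iv) [F-equation with c = δ²] s·2μ·e^{3φ}f(φ) + e^{2φ}H(φ) + 2e^{2φ}G(φ) + 3e^{4φ}f(φ)² = δ²; (v) [Kink equation] e^{φ}(F(φ) + G(φ)) + (1/2)e^{3φ}f(φ)² − (2/ℓ²)e^{φ} + (s/(2μ))·(−s·(2μ/3)e^{φ}(F(φ) + G(φ)) + e^{2φ}f(φ)H(φ) + 2e^{2φ}f(φ)G(φ)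 + 2e^{4φ}f(φ)³) = 0. -/
/-! All five relations are identities between Laurent polynomials in `e^φ`: the first two come
from differentiating `e^{-φ}` and `e^{-2φ}`, the other three hold after clearing powers of `e^φ`,
with `s` entering only through `s² = 1`. -/

open Real

theorem Real.exp_ofNat_mul (n : ℕ) [n.AtLeastTwo] (x : ℝ) :
    exp (no_index (OfNat.ofNat n : ℝ) * x) = exp x ^ (OfNat.ofNat n : ℕ) := by
  exact_mod_cast exp_nat_mul x n

theorem Real.hasDerivAt_exp_neg_mul (c x : ℝ) :
    HasDerivAt (fun y => exp (-(c * y))) (-c * exp (-(c * x))) x := by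
  simpa [mul_comm] using (((hasDerivAt_id x).const_mul c).neg).exp

namespace KinkyCase2

variable (s μ δ d : ℝ)

noncomputable def f (φ : ℝ) : ℝ := -s * (2 * μ / 3) * exp (-φ) + δ * exp (-(2 * φ))

noncomputable def F (φ : ℝ) : ℝ :=
  -s * (2 / 3) * μ * δ * exp (-φ) + (1 / 4) * δ ^ 2 * exp (-(2 * φ)) + d

noncomputable def G (φ : ℝ) : ℝ :=
  s * (2 / 3) * μ * δ * exp (-φ) - (1 / 2) * δ ^ 2 * exp (-(2 * φ))

noncomputable def H (φ : ℝ) : ℝ := -(δ ^ 2) * exp (-(2 * φ)) + s * (2 / 3) * μ * δ * exp (-φ)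

theorem hasDerivAt_F (φ : ℝ) : HasDerivAt (F s μ δ d) (G s μ δ φ) φ :=
  ((((hasDerivAt_neg φ).exp.const_mul (-s * (2 / 3) * μ * δ)).add
    ((hasDerivAt_exp_neg_mul 2 φ).const_mul ((1 / 4) * δ ^ 2))).add_const d).congr_deriv
    (by simp only [G]; ring)

theorem hasDerivAt_G (φ : ℝ) : HasDerivAt (G s μ δ) (-H s μ δ φ) φ :=
  (((hasDerivAt_neg φ).exp.const_mul (s * (2 / 3) * μ * δ)).sub
    ((hasDerivAt_exp_neg_mul 2 φ).const_mul ((1 / 2) * δ ^ 2))).congr_deriv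
    (by simp only [H]; ring)

theorem F_equation (φ : ℝ) :
    s * 2 * μ * exp (3 * φ) * f s μ δ φ + exp (2 * φ) * H s μ δ φ +
      2 * exp (2 * φ) * G s μ δ φ + 3 * exp (4 * φ) * f s μ δ φ ^ 2 = δ ^ 2 := by
  simp only [f, G, H, exp_neg, exp_ofNat_mul]
  field_simp
  ring

variable {s}

theorem dilaton_equation (ℓ : ℝ) (hs : s = -1 ∨ s = 1) (φ : ℝ) :
    H s μ δ φ - 2 * G s μ δ φ - 2 * F s μ δ (3 / ℓ ^ 2 + μ ^ 2 / 9) φ +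
      (1 / 2) * exp (2 * φ) * f s μ δ φ ^ 2 = -6 / ℓ ^ 2 := by
  simp only [f, F, G, H, exp_neg, exp_ofNat_mul]
  rw [div_eq_mul_inv 3, div_eq_mul_inv (-6)]
  generalize (ℓ ^ 2)⁻¹ = L
  rcases hs with rfl | rfl <;> field_simp <;> ring

theorem kink_equation (ℓ : ℝ) (hs : s = -1 ∨ s = 1) (hμ : μ ≠ 0) (φ : ℝ) :
    exp φ * (F s μ δ (3 / ℓ ^ 2 + μ ^ 2 / 9) φ + G s μ δ φ) +
        (1 / 2) * exp (3 * φ) * f s μ δ φ ^ 2 - (2 / ℓ ^ 2) * exp φ +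
      (s / (2 * μ)) *
        (-s * (2 * μ / 3) * exp φ * (F s μ δ (3 / ℓ ^ 2 + μ ^ 2 / 9) φ + G s μ δ φ) +
          exp (2 * φ) * f s μ δ φ * H s μ δ φ + 2 * exp (2 * φ) * f s μ δ φ * G s μ δ φ +
          2 * exp (4 * φ) * f s μ δ φ ^ 3) = 0 := by
  simp only [f, F, G, H, exp_neg, exp_ofNat_mul]
  rw [div_eq_mul_inv 3, div_eq_mul_inv 2 (ℓ ^ 2)]
  generalize (ℓ ^ 2)⁻¹ = L
  rcases hs with rfl | rfl <;> field_simp <;> ring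

end KinkyCase2

theorem stmt12_general (s μ ℓ δ d : ℝ) (hs : s = -1 ∨ s = 1) (hμ : μ ≠ 0)
    (hd : d = 3 / ℓ ^ 2 + μ ^ 2 / 9)
    (f F G H : ℝ → ℝ)
    (hf : ∀ φ : ℝ, f φ = -s * (2 * μ / 3) * Real.exp (-φ) + δ * Real.exp (-(2 * φ)))
    (hF : ∀ φ : ℝ, F φ = -s * (2 / 3) * μ * δ * Real.exp (-φ) +
      (1 / 4) * δ ^ 2 * Real.exp (-(2 * φ)) + d)
    (hG : ∀ φ : ℝ, G φ = s * (2 / 3) * μ * δ * Real.exp (-φ) -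
      (1 / 2) * δ ^ 2 * Real.exp (-(2 * φ)))
    (hH : ∀ φ : ℝ, H φ = -(δ ^ 2) * Real.exp (-(2 * φ)) +
      s * (2 / 3) * μ * δ * Real.exp (-φ)) :
    ∀ φ : ℝ,
      deriv F φ = G φ ∧
      deriv G φ = -H φ ∧
      H φ - 2 * G φ - 2 * F φ + (1 / 2) * Real.exp (2 * φ) * f φ ^ 2 = -6 / ℓ ^ 2 ∧
      s * 2 * μ * Real.exp (3 * φ) * f φ + Real.exp (2 * φ) * H φ +
          2 * Real.exp (2 * φ) * G φ + 3 * Real.exp (4 * φ) * f φ ^ 2 = δ ^ 2 ∧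
      Real.exp φ * (F φ + G φ) + (1 / 2) * Real.exp (3 * φ) * f φ ^ 2 -
          (2 / ℓ ^ 2) * Real.exp φ +
          (s / (2 * μ)) *
            (-s * (2 * μ / 3) * Real.exp φ * (F φ + G φ) +
              Real.exp (2 * φ) * f φ * H φ + 2 * Real.exp (2 * φ) * f φ * G φ +
              2 * Real.exp (4 * φ) * f φ ^ 3) = 0 := by
  obtain rfl : f = KinkyCase2.f s μ δ := funext hf
  obtain rfl : F = KinkyCase2.F s μ δ d := funext hF
  obtain rfl : G = KinkyCase2.G s μ δ := funext hG
  obtain rfl : H = KinkyCase2.H s μ δ := funext hH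
  subst hd
  intro φ
  exact ⟨(KinkyCase2.hasDerivAt_F s μ δ _ φ).deriv, (KinkyCase2.hasDerivAt_G s μ δ φ).deriv,
    KinkyCase2.dilaton_equation μ δ ℓ hs φ, KinkyCase2.F_equation s μ δ φ,
    KinkyCase2.kink_equation μ δ ℓ hs hμ φ⟩

/-- Case 2 of the paper: `c − δ² = k̃ = α = 0`, locally spacelike or
timelike warped AdS₃. With `|dφ|² = F(φ)`, `D²φ = G(φ)`, `R̄ = H(φ)` and
`f = −s(2μ/3)e^{−φ} + δe^{−2φ}` as displayed, the consistency relations `F′ = G`,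
`G′ = −H` and the dilaton, F- and Kink equations of reduced TMG all hold identically
in `φ`. -/
theorem stmt12 (s μ ℓ δ d : ℝ) (hs : s = -1 ∨ s = 1) (hμ : μ ≠ 0) (hℓ : 0 < ℓ)
    (hd : d = 3 / ℓ ^ 2 + μ ^ 2 / 9)
    (f F G H : ℝ → ℝ)
    (hf : ∀ φ : ℝ, f φ = -s * (2 * μ / 3) * Real.exp (-φ) + δ * Real.exp (-(2 * φ)))
    (hF : ∀ φ : ℝ, F φ = -s * (2 / 3) * μ * δ * Real.exp (-φ) +
      (1 / 4) * δ ^ 2 * Real.exp (-(2 * φ)) + d)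
    (hG : ∀ φ : ℝ, G φ = s * (2 / 3) * μ * δ * Real.exp (-φ) -
      (1 / 2) * δ ^ 2 * Real.exp (-(2 * φ)))
    (hH : ∀ φ : ℝ, H φ = -(δ ^ 2) * Real.exp (-(2 * φ)) +
      s * (2 / 3) * μ * δ * Real.exp (-φ)) :
    ∀ φ : ℝ,
      deriv F φ = G φ ∧
      deriv G φ = -H φ ∧
      H φ - 2 * G φ - 2 * F φ + (1 / 2) * Real.exp (2 * φ) * f φ ^ 2 = -6 / ℓ ^ 2 ∧
      s * 2 * μ * Real.exp (3 * φ) * f φ + Real.exp (2 * φ) * H φ +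
          2 * Real.exp (2 * φ) * G φ + 3 * Real.exp (4 * φ) * f φ ^ 2 = δ ^ 2 ∧
      Real.exp φ * (F φ + G φ) + (1 / 2) * Real.exp (3 * φ) * f φ ^ 2 -
          (2 / ℓ ^ 2) * Real.exp φ +
          (s / (2 * μ)) *
            (-s * (2 * μ / 3) * Real.exp φ * (F φ + G φ) +
              Real.exp (2 * φ) * f φ * H φ + 2 * Real.exp (2 * φ) * f φ * G φ +
              2 * Real.exp (4 * φ) * f φ ^ 3) = 0 :=
  stmt12_general s μ ℓ δ d hs hμ hd f F G H hf hF hG hH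
end

section
/- Fix a sign s ∈ {−1, 1} and real numbers μ ≠ 0, ℓ > 0, α with α ≠ 3/2, and suppose the constraint μ²ℓ²(2α+1)² = (2α−3)² holds. Set A := 4μ²/(2α−3)² and B := s·2μ(1−2α)/(2α−3), and define f, F, G, H : ℝ → ℝ by f(φ) = B·e^{(2α−1)φ}, F(φ) = A·e^{2αφ}, G(φ) = 2(α/ℓ² + μ²(1−2α)(2α²+3α)/(2α−3)²)·e^{2αφ}, H(φ) = −G′(φ). Then for all φ ∈ ℝ: (i) F′(φ) = G(φ); (ii) [dilaton equation] e^{−2αφ}H(φ) − 2(α+1)e^{−2αφ}G(φ) − 2e^{−2αφ}F(φ) + (1/2)e^{(−4α+2)φ}f(φ)² = −6/ℓ²; (iii) [F-equation with c = 0] s·2μ·e^{(−2α+3)φ}f(φ) + e^{2(1−α)φ}H(φ) − 2(α−1)e^{2(1−α)φ}G(φ) + 3e^{4(1−α)φ}f(φ)² = 0; (iv) [Kink equation] (1+2α)A·e^{(2α+1)φ} + (1/2)B²e^{(2α+1)φ} − (2/ℓ²)e^{(2α+1)φ} + (s/(2μ))·B·((1+2α)A − 4α²A − 4α(α−1)A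 + 2B²)·e^{(2α+1)φ} = 0, where (1+2α)A e^{(2α+1)φ} = D²e^{φ} and (1+2α)AB e^{(2α+1)φ} = D²(e^{(−2α+2)φ}f) via the reduction rule D²(W(φ)) = W″F + W′G. -/
/-! The constraint says exactly `A ℓ² (2α+1)² = 4`, and `s² = 1` gives `B² = (1−2α)² A`.
With these, the coefficient of `G` collapses to `2αA`, so `G = F′` and `H = −4α²A e^{2αφ}`.
In each field equation the exponential weights cancel the `φ`-dependence of every term (to `1`,
`e^{2φ}` or `e^{(2α+1)φ}` respectively), and what remains is a polynomial identity in `α`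
times `A`. -/

open Real

theorem deriv_const_mul_exp_mul (a c : ℝ) :
    deriv (fun y => a * exp (c * y)) = fun y => a * c * exp (c * y) := by
  funext y
  exact (((hasDerivAt_id y).const_mul c).exp.const_mul a).deriv.trans (by simp only [id_eq]; ring)

theorem exp_mul_mul_exp_mul_pow {a b c : ℝ} (x : ℝ) (n : ℕ) (h : a + n * b = c) :
    exp (a * x) * exp (b * x) ^ n = exp (c * x) := by
  rw [← exp_nat_mul, ← exp_add, ← h]
  ring_nf

theorem exp_mul_mul_exp_mul_pow_eq_one {a b : ℝ} (x : ℝ) (n : ℕ) (h : a + n * b = 0) :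
    exp (a * x) * exp (b * x) ^ n = 1 := by
  rw [exp_mul_mul_exp_mul_pow x n h, zero_mul, exp_zero]

section Constants

variable {s μ ℓ α A B : ℝ}

theorem one_div_sq_eq_of_constraint (hα : α ≠ 3 / 2)
    (hc : μ ^ 2 * ℓ ^ 2 * (2 * α + 1) ^ 2 = (2 * α - 3) ^ 2)
    (hA : A = 4 * μ ^ 2 / (2 * α - 3) ^ 2) :
    1 / ℓ ^ 2 = A * (2 * α + 1) ^ 2 / 4 := by
  have hk : 2 * α - 3 ≠ 0 := fun h => hα (by linarith)
  have hℓ : ℓ ≠ 0 := by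
    rintro rfl
    exact hk (pow_eq_zero_iff two_ne_zero |>.mp (by linarith))
  rw [hA]
  field_simp
  linear_combination -hc

theorem sq_eq_of_sign (hs : s = -1 ∨ s = 1) (hA : A = 4 * μ ^ 2 / (2 * α - 3) ^ 2)
    (hB : B = s * 2 * μ * (1 - 2 * α) / (2 * α - 3)) :
    B ^ 2 = (1 - 2 * α) ^ 2 * A := by
  rw [hA, hB, div_pow]
  rcases hs with rfl | rfl <;> ring

theorem sign_mul_mul_eq (hα : α ≠ 3 / 2) (hs : s = -1 ∨ s = 1)
    (hA : A = 4 * μ ^ 2 / (2 * α - 3) ^ 2)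
    (hB : B = s * 2 * μ * (1 - 2 * α) / (2 * α - 3)) :
    s * 2 * μ * B = (1 - 2 * α) * (2 * α - 3) * A := by
  have hk : 2 * α - 3 ≠ 0 := fun h => hα (by linarith)
  subst hA hB
  field_simp
  rcases hs with rfl | rfl <;> ring

theorem sign_div_mul_mul_eq (hα : α ≠ 3 / 2) (hμ : μ ≠ 0) (hs : s = -1 ∨ s = 1)
    (hB : B = s * 2 * μ * (1 - 2 * α) / (2 * α - 3)) :
    s / (2 * μ) * B * (2 * α - 3) = 1 - 2 * α := by
  have hk : 2 * α - 3 ≠ 0 := fun h => hα (by linarith)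
  subst hB
  field_simp
  rcases hs with rfl | rfl <;> ring

theorem G_coeff_eq (hℓ : 1 / ℓ ^ 2 = A * (2 * α + 1) ^ 2 / 4)
    (hA : A = 4 * μ ^ 2 / (2 * α - 3) ^ 2) :
    2 * (α / ℓ ^ 2 + μ ^ 2 * (1 - 2 * α) * (2 * α ^ 2 + 3 * α) / (2 * α - 3) ^ 2) =
      2 * α * A := by
  linear_combination 2 * α * hℓ - (1 - 2 * α) * (2 * α ^ 2 + 3 * α) / 2 * hA

theorem dilaton_equation_exp_ansatz (φ : ℝ) (hℓ : 1 / ℓ ^ 2 = A * (2 * α + 1) ^ 2 / 4)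
    (hB : B ^ 2 = (1 - 2 * α) ^ 2 * A) :
    exp (-(2 * α) * φ) * (-(A * (2 * α) * (2 * α)) * exp (2 * α * φ)) -
        2 * (α + 1) * exp (-(2 * α) * φ) * (A * (2 * α) * exp (2 * α * φ)) -
        2 * exp (-(2 * α) * φ) * (A * exp (2 * α * φ)) +
        (1 / 2) * exp ((-(4 * α) + 2) * φ) * (B * exp ((2 * α - 1) * φ)) ^ 2 =
      -6 / ℓ ^ 2 := by
  have hG := exp_mul_mul_exp_mul_pow_eq_one φ 1 (a := -(2 * α)) (b := 2 * α) (by ring)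
  have hf := exp_mul_mul_exp_mul_pow_eq_one φ 2 (a := -(4 * α) + 2) (b := 2 * α - 1) (by ring)
  linear_combination (-(A * (2 * α) * (2 * α)) - 2 * (α + 1) * (A * (2 * α)) - 2 * A) * hG +
    B ^ 2 / 2 * hf + hB / 2 + 6 * hℓ

theorem F_equation_exp_ansatz (φ : ℝ) (hB : B ^ 2 = (1 - 2 * α) ^ 2 * A)
    (hsB : s * 2 * μ * B = (1 - 2 * α) * (2 * α - 3) * A) :
    s * 2 * μ * exp ((-(2 * α) + 3) * φ) * (B * exp ((2 * α - 1) * φ)) +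
        exp (2 * (1 - α) * φ) * (-(A * (2 * α) * (2 * α)) * exp (2 * α * φ)) -
        2 * (α - 1) * exp (2 * (1 - α) * φ) * (A * (2 * α) * exp (2 * α * φ)) +
        3 * exp (4 * (1 - α) * φ) * (B * exp ((2 * α - 1) * φ)) ^ 2 = 0 := by
  have hf := exp_mul_mul_exp_mul_pow φ 1 (a := -(2 * α) + 3) (b := 2 * α - 1) (c := 2) (by ring)
  have hG := exp_mul_mul_exp_mul_pow φ 1 (a := 2 * (1 - α)) (b := 2 * α) (c := 2) (by ring)
  have hf2 := exp_mul_mul_exp_mul_pow φ 2 (a := 4 * (1 - α)) (b := 2 * α - 1) (c := 2) (by ring)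
  linear_combination s * 2 * μ * B * hf +
    (-(A * (2 * α) * (2 * α)) - 2 * (α - 1) * (A * (2 * α))) * hG + 3 * B ^ 2 * hf2 +
    exp (2 * φ) * (hsB + 3 * hB)

end Constants

theorem stmt13_general (s μ ℓ α A B : ℝ) (hs : s = -1 ∨ s = 1) (hμ : μ ≠ 0)
    (hα : α ≠ 3 / 2)
    (hconstraint : μ ^ 2 * ℓ ^ 2 * (2 * α + 1) ^ 2 = (2 * α - 3) ^ 2)
    (hA : A = 4 * μ ^ 2 / (2 * α - 3) ^ 2)
    (hB : B = s * 2 * μ * (1 - 2 * α) / (2 * α - 3))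
    (f F G H : ℝ → ℝ)
    (hf : ∀ φ : ℝ, f φ = B * Real.exp ((2 * α - 1) * φ))
    (hF : ∀ φ : ℝ, F φ = A * Real.exp (2 * α * φ))
    (hG : ∀ φ : ℝ, G φ =
      2 * (α / ℓ ^ 2 + μ ^ 2 * (1 - 2 * α) * (2 * α ^ 2 + 3 * α) / (2 * α - 3) ^ 2) *
        Real.exp (2 * α * φ))
    (hH : ∀ φ : ℝ, H φ = -deriv G φ) :
    ∀ φ : ℝ,
      deriv F φ = G φ ∧
      Real.exp (-(2 * α) * φ) * H φ - 2 * (α + 1) * Real.exp (-(2 * α) * φ) * G φ -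
          2 * Real.exp (-(2 * α) * φ) * F φ +
          (1 / 2) * Real.exp ((-(4 * α) + 2) * φ) * f φ ^ 2 = -6 / ℓ ^ 2 ∧
      s * 2 * μ * Real.exp ((-(2 * α) + 3) * φ) * f φ +
          Real.exp (2 * (1 - α) * φ) * H φ -
          2 * (α - 1) * Real.exp (2 * (1 - α) * φ) * G φ +
          3 * Real.exp (4 * (1 - α) * φ) * f φ ^ 2 = 0 ∧
      (1 + 2 * α) * A * Real.exp ((2 * α + 1) * φ) +
          (1 / 2) * B ^ 2 * Real.exp ((2 * α + 1) * φ) -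
          (2 / ℓ ^ 2) * Real.exp ((2 * α + 1) * φ) +
          (s / (2 * μ)) * B *
            ((1 + 2 * α) * A - 4 * α ^ 2 * A - 4 * α * (α - 1) * A + 2 * B ^ 2) *
            Real.exp ((2 * α + 1) * φ) = 0 ∧
      deriv (deriv fun y : ℝ => Real.exp y) φ * F φ +
          deriv (fun y : ℝ => Real.exp y) φ * G φ =
        (1 + 2 * α) * A * Real.exp ((2 * α + 1) * φ) ∧
      deriv (deriv fun y : ℝ => Real.exp ((-(2 * α) + 2) * y) * f y) φ * F φ +
          deriv (fun y : ℝ => Real.exp ((-(2 * α) + 2) * y) * f y) φ * G φ =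
        (1 + 2 * α) * A * B * Real.exp ((2 * α + 1) * φ) := by
  have hℓ2 := one_div_sq_eq_of_constraint hα hconstraint hA
  have hB2 := sq_eq_of_sign hs hA hB
  have hG' : G = fun y => A * (2 * α) * exp (2 * α * y) := by
    funext y; rw [hG, G_coeff_eq hℓ2 hA, mul_comm A]
  have hF' : F = fun y => A * exp (2 * α * y) := funext hF
  have hFG : deriv F = G := by rw [hF', hG', deriv_const_mul_exp_mul]
  have hH' : ∀ y, H y = -(A * (2 * α) * (2 * α)) * exp (2 * α * y) := by
    intro y; rw [hH, hG', deriv_const_mul_exp_mul, neg_mul]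
  have hBexp : (fun y => exp ((-(2 * α) + 2) * y) * f y) = fun y => B * exp y := by
    funext y
    rw [hf, mul_left_comm, ← exp_add]
    ring_nf
  intro φ
  have exp_weight_split : exp ((2 * α + 1) * φ) = exp (2 * α * φ) * exp φ := by
    rw [← exp_add]; ring_nf
  refine ⟨congrFun hFG φ, ?_, ?_, ?_, ?_, ?_⟩
  · rw [hH', hG', hF, hf]
    exact dilaton_equation_exp_ansatz φ hℓ2 hB2
  · rw [hH', hG', hf]
    exact F_equation_exp_ansatz φ hB2 (sign_mul_mul_eq hα hs hA hB)
  · linear_combination exp ((2 * α + 1) * φ) *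
      (hB2 / 2 - 2 * hℓ2 + s / (2 * μ) * B * 2 * hB2 - A * sign_div_mul_mul_eq hα hμ hs hB)
  · rw [Real.deriv_exp, Real.deriv_exp, hF, hG', exp_weight_split]
    ring
  · rw [hBexp, deriv_const_mul_field', Real.deriv_exp, deriv_const_mul_field', Real.deriv_exp,
      hF, hG', exp_weight_split]
    ring

/-- Case 3 of the paper: `δ = c = k̃ = 0` with
`μ²ℓ²(2α+1)² = (2α−3)²`, the TMG pp-wave. With `A = 4μ²/(2α−3)²`,
`B = s·2μ(1−2α)/(2α−3)`, `f = B e^{(2α−1)φ}`, `|dφ|² = F(φ) = A e^{2αφ}`,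
`D²φ = G(φ)`, `R̄ = H(φ) = −G′(φ)`, the consistency relation `F′ = G`, the dilaton
equation, the F-equation (with `c = 0`) and the Kink equation all hold identically in
`φ`; moreover, via the reduction rule `D²(W(φ)) = W″F + W′G`, one has
`D²e^{φ} = (1+2α)A e^{(2α+1)φ}` and `D²(e^{(−2α+2)φ}f) = (1+2α)AB e^{(2α+1)φ}`. -/
theorem stmt13 (s μ ℓ α A B : ℝ) (hs : s = -1 ∨ s = 1) (hμ : μ ≠ 0) (hℓ : 0 < ℓ)
    (hα : α ≠ 3 / 2)
    (hconstraint : μ ^ 2 * ℓ ^ 2 * (2 * α + 1) ^ 2 = (2 * α - 3) ^ 2)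
    (hA : A = 4 * μ ^ 2 / (2 * α - 3) ^ 2)
    (hB : B = s * 2 * μ * (1 - 2 * α) / (2 * α - 3))
    (f F G H : ℝ → ℝ)
    (hf : ∀ φ : ℝ, f φ = B * Real.exp ((2 * α - 1) * φ))
    (hF : ∀ φ : ℝ, F φ = A * Real.exp (2 * α * φ))
    (hG : ∀ φ : ℝ, G φ =
      2 * (α / ℓ ^ 2 + μ ^ 2 * (1 - 2 * α) * (2 * α ^ 2 + 3 * α) / (2 * α - 3) ^ 2) *
        Real.exp (2 * α * φ))
    (hH : ∀ φ : ℝ, H φ = -deriv G φ) :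
    ∀ φ : ℝ,
      deriv F φ = G φ ∧
      Real.exp (-(2 * α) * φ) * H φ - 2 * (α + 1) * Real.exp (-(2 * α) * φ) * G φ -
          2 * Real.exp (-(2 * α) * φ) * F φ +
          (1 / 2) * Real.exp ((-(4 * α) + 2) * φ) * f φ ^ 2 = -6 / ℓ ^ 2 ∧
      s * 2 * μ * Real.exp ((-(2 * α) + 3) * φ) * f φ +
          Real.exp (2 * (1 - α) * φ) * H φ -
          2 * (α - 1) * Real.exp (2 * (1 - α) * φ) * G φ +
          3 * Real.exp (4 * (1 - α) * φ) * f φ ^ 2 = 0 ∧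
      (1 + 2 * α) * A * Real.exp ((2 * α + 1) * φ) +
          (1 / 2) * B ^ 2 * Real.exp ((2 * α + 1) * φ) -
          (2 / ℓ ^ 2) * Real.exp ((2 * α + 1) * φ) +
          (s / (2 * μ)) * B *
            ((1 + 2 * α) * A - 4 * α ^ 2 * A - 4 * α * (α - 1) * A + 2 * B ^ 2) *
            Real.exp ((2 * α + 1) * φ) = 0 ∧
      deriv (deriv fun y : ℝ => Real.exp y) φ * F φ +
          deriv (fun y : ℝ => Real.exp y) φ * G φ =
        (1 + 2 * α) * A * Real.exp ((2 * α + 1) * φ) ∧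
      deriv (deriv fun y : ℝ => Real.exp ((-(2 * α) + 2) * y) * f y) φ * F φ +
          deriv (fun y : ℝ => Real.exp ((-(2 * α) + 2) * y) * f y) φ * G φ =
        (1 + 2 * α) * A * B * Real.exp ((2 * α + 1) * φ) :=
  stmt13_general s μ ℓ α A B hs hμ hα hconstraint hA hB f F G H hf hF hG hH
end
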